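/- arXiv:1901.11105 — 2 statements merged into one kernel-verified Lean document; each statement's English description precedes it below -/
import Mathlib

section
/- The PR-box strategy wins the CHSH game with probability 1, so the nonsignalling value of the CHSH game equals 1, which is strictly greater than its classical value 3/4. -/
/-- The PR-box strategy. -/
noncomputable def prBox (u₁ u₂ x₁ x₂ : Bool) : ℝ :=
  if xor u₁ u₂ = (x₁ && x₂) then (1/2 : ℝ) else 0

/-- A channel `P(u₁,u₂|x₁,x₂)` is a nonsignalling strategy: nonnegative, normalized,
and its marginals do not signal. -/
def IsNonsignalling (P : Bool → Bool → Bool → Bool → ℝ) : Prop :=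
  (∀ u₁ u₂ x₁ x₂, 0 ≤ P u₁ u₂ x₁ x₂) ∧
  (∀ x₁ x₂, ∑ u₁ : Bool, ∑ u₂ : Bool, P u₁ u₂ x₁ x₂ = 1) ∧
  (∀ u₁ x₁ x₂ x₂', (∑ u₂, P u₁ u₂ x₁ x₂) = ∑ u₂, P u₁ u₂ x₁ x₂') ∧
  (∀ u₂ x₂ x₁ x₁', (∑ u₁, P u₁ u₂ x₁ x₂) = ∑ u₁, P u₁ u₂ x₁' x₂)

/-- Winning probability of a strategy in the CHSH game (uniform queries). -/
noncomputable def chshVal (P : Bool → Bool → Bool → Bool → ℝ) : ℝ :=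
  ∑ x₁ : Bool, ∑ x₂ : Bool, ∑ u₁ : Bool, ∑ u₂ : Bool,
    (1/4 : ℝ) * P u₁ u₂ x₁ x₂ * (if xor u₁ u₂ = (x₁ && x₂) then (1 : ℝ) else 0)


lemma prBox_val : chshVal prBox = 1 := by
  simp [chshVal, prBox, Fintype.sum_bool]
  norm_num

lemma prBox_ns : IsNonsignalling prBox := by
  refine ⟨?_, ?_, ?_, ?_⟩
  · intro u₁ u₂ x₁ x₂; unfold prBox; split <;> norm_num
  · intro x₁ x₂; simp [prBox, Fintype.sum_bool]; cases x₁ <;> cases x₂ <;> norm_num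
  · intro u₁ x₁ x₂ x₂'; simp [prBox, Fintype.sum_bool]
    cases u₁ <;> cases x₁ <;> cases x₂ <;> cases x₂' <;> norm_num
  · intro u₂ x₂ x₁ x₁'; simp [prBox, Fintype.sum_bool]
    cases u₂ <;> cases x₁ <;> cases x₂ <;> cases x₁' <;> norm_num

lemma chsh_le_one {P : Bool → Bool → Bool → Bool → ℝ} (h : IsNonsignalling P) :
    chshVal P ≤ 1 := by
  obtain ⟨hpos, hnorm, -, -⟩ := h
  have key : ∀ x₁ x₂ : Bool, (∑ u₁ : Bool, ∑ u₂ : Bool,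
      (1/4 : ℝ) * P u₁ u₂ x₁ x₂ * (if xor u₁ u₂ = (x₁ && x₂) then (1 : ℝ) else 0))
      ≤ 1/4 := by
    intro x₁ x₂
    have : (∑ u₁ : Bool, ∑ u₂ : Bool,
        (1/4 : ℝ) * P u₁ u₂ x₁ x₂ * (if xor u₁ u₂ = (x₁ && x₂) then (1 : ℝ) else 0))
        ≤ ∑ u₁ : Bool, ∑ u₂ : Bool, (1/4 : ℝ) * P u₁ u₂ x₁ x₂ := by
      apply Finset.sum_le_sum; intro u₁ _
      apply Finset.sum_le_sum; intro u₂ _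
      have h1 := hpos u₁ u₂ x₁ x₂
      split <;> nlinarith
    calc _ ≤ ∑ u₁ : Bool, ∑ u₂ : Bool, (1/4 : ℝ) * P u₁ u₂ x₁ x₂ := this
    _ = (1/4 : ℝ) * ∑ u₁ : Bool, ∑ u₂ : Bool, P u₁ u₂ x₁ x₂ := by
        simp [Fintype.sum_bool]; ring
    _ = 1/4 := by rw [hnorm]; norm_num
  have : chshVal P ≤ ∑ x₁ : Bool, ∑ x₂ : Bool, (1/4 : ℝ) := by
    unfold chshVal
    apply Finset.sum_le_sum; intro x₁ _
    apply Finset.sum_le_sum; intro x₂ _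
    exact key x₁ x₂
  refine this.trans (le_of_eq ?_); simp [Fintype.sum_bool]; norm_num

/-- The PR box wins the CHSH game with probability `1`, the nonsignalling value of
the CHSH game equals `1`, and this is strictly greater than the classical value `3/4`. -/
theorem chsh_nonsignalling_value :
    chshVal prBox = 1 ∧
    IsGreatest {v : ℝ | ∃ P, IsNonsignalling P ∧ v = chshVal P} 1 ∧
    (3/4 : ℝ) < 1 := by
  refine ⟨prBox_val, ⟨⟨prBox, prBox_ns, prBox_val.symm⟩, ?_⟩, by norm_num⟩
  rintro v ⟨P, hP, rfl⟩
  exact chsh_le_one hP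
end

section
/- If a winning event has probability greater than exp(−nδ) under a strategy, then under the conditioned (changed) measure the approximate-nonsignalling constraint holds: for each A ⊊ M, I(Ũ_Aⁿ ∧ X̃_{A^c}ⁿ | X̃_Aⁿ) + D(P̃_{X_Mⁿ} ‖ P_{X_M}ⁿ) ≤ D(P̃_{U_Mⁿ X_Mⁿ} ‖ P_{U_Mⁿ X_Mⁿ}) ≤ nδ, where P̃ denotes the joint measure conditioned on the winning event C and P_{U_Mⁿ|X_Mⁿ} is a sub-nonsignalling strategy. -/
open Finset

/-- A probability mass function on a finite set. -/
def IsPmf {α : Type*} [Fintype α] (P : α → ℝ) : Prop :=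
  (∀ x, 0 ≤ P x) ∧ ∑ x, P x = 1

/-- Marginal (pushforward) of a measure `P` along a map `f`. -/
noncomputable def marg {α β : Type*} [Fintype α] [DecidableEq β]
    (f : α → β) (P : α → ℝ) : β → ℝ :=
  fun y => ∑ x, if f x = y then P x else 0

/-- KL divergence in nats, with the convention `0 · log 0 = 0` (and `x/0 = 0`). -/
noncomputable def klDiv {α : Type*} [Fintype α] (Q P : α → ℝ) : ℝ :=
  ∑ x, Q x * Real.log (Q x / P x)

/-- Conditional mutual information `I(a(Z) ∧ b(Z) | c(Z))` in nats, for `Z ∼ T`. -/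
noncomputable def condMI {γ α β σ : Type*} [Fintype γ]
    [Fintype α] [Fintype β] [Fintype σ] [DecidableEq α] [DecidableEq β] [DecidableEq σ]
    (T : γ → ℝ) (a : γ → α) (b : γ → β) (c : γ → σ) : ℝ :=
  ∑ z, T z * Real.log
    ((marg (fun w => (a w, b w, c w)) T (a z, b z, c z) * marg c T (c z)) /
     (marg (fun w => (a w, c w)) T (a z, c z) * marg (fun w => (b w, c w)) T (b z, c z)))

/-- Total variation distance. -/
noncomputable def dvar {α : Type*} [Fintype α] (P Q : α → ℝ) : ℝ :=
  (1/2 : ℝ) * ∑ x, |P x - Q x|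

/-!
Write `T` for the conditioned measure, `a`, `b`, `c` for the restrictions to the outputs in `A`,
the inputs outside `A` and the inputs in `A`, and set
`R(u, x) = K(u | x) T(a u, x) T(c x) / T(a u, c x)`. Expanding the logarithms gives the exact
decomposition `D(T ‖ P_X K) = I(a ∧ b | c) + D(T_X ‖ P_X) + D(T ‖ R)`. Summing `R` over the outputs
outside `A` replaces `K` by its `A`-marginal, which sub-nonsignalling bounds by `Q(· | c x)`; what
is left, `Q(α | c x) T(x | α, c x) T(c x)`, has total mass at most that of `T`, so `D(T ‖ R) ≥ 0`
by Gibbs' inequality. Finally, `P` conditioned on `C` is at divergence exactly `-log P(C) < nδ`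
from `P`.
-/

open Real

section Marginal

variable {γ β : Type*} [Fintype γ] [DecidableEq β] {T : γ → ℝ}

lemma marg_nonneg (hT : ∀ z, 0 ≤ T z) (f : γ → β) (y : β) : 0 ≤ marg f T y :=
  sum_nonneg fun z _ => by split_ifs <;> simp [hT z]

lemma le_marg_apply (hT : ∀ z, 0 ≤ T z) (f : γ → β) (z : γ) : T z ≤ marg f T (f z) := by
  simpa [marg] using single_le_sum (f := fun w => if f w = f z then T w else 0)
    (fun w _ => by split_ifs <;> simp [hT w]) (mem_univ z)

lemma marg_apply_ne_zero (hT : ∀ z, 0 ≤ T z) (f : γ → β) {z : γ} (hz : T z ≠ 0) :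
    marg f T (f z) ≠ 0 :=
  ((hT z).lt_of_ne' hz |>.trans_le (le_marg_apply hT f z)).ne'

lemma marg_comp_apply_of_injective {δ : Type*} [DecidableEq δ] (f : γ → β) {g : β → δ}
    (hg : g.Injective) (T : γ → ℝ) (y : β) : marg (fun z => g (f z)) T (g y) = marg f T y := by
  simp only [marg, hg.eq_iff]

lemma sum_marg_mul [Fintype β] (f : γ → β) (T : γ → ℝ) (h : β → ℝ) :
    ∑ y, marg f T y * h y = ∑ z, T z * h (f z) := by
  simp only [marg, sum_mul, ite_mul, zero_mul]
  rw [sum_comm]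
  simp

lemma sum_marg [Fintype β] (f : γ → β) (T : γ → ℝ) : ∑ y, marg f T y = ∑ z, T z := by
  simpa using sum_marg_mul f T 1

end Marginal

lemma sub_le_mul_log_div {a b : ℝ} (ha : 0 ≤ a) (hb : 0 ≤ b) (hab : a ≠ 0 → b ≠ 0) :
    a - b ≤ a * log (a / b) := by
  rcases ha.eq_or_lt with rfl | ha
  · simpa using hb
  have hb := hb.lt_of_ne' (hab ha.ne')
  have := mul_le_mul_of_nonneg_left (one_sub_inv_le_log_of_pos (div_pos ha hb)) ha.le
  rwa [inv_div, mul_sub, mul_one, mul_div_cancel₀ _ ha.ne'] at this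

lemma sum_sub_sum_le_klDiv {γ : Type*} [Fintype γ] {T R : γ → ℝ} (hT : ∀ z, 0 ≤ T z)
    (hR : ∀ z, 0 ≤ R z) (hTR : ∀ z, T z ≠ 0 → R z ≠ 0) : ∑ z, T z - ∑ z, R z ≤ klDiv T R := by
  rw [← sum_sub_distrib]
  exact sum_le_sum fun z _ => sub_le_mul_log_div (hT z) (hR z) (hTR z)

section Conditioning

variable {γ : Type*} [DecidableEq γ] {P : γ → ℝ} {C : Finset γ}

noncomputable def conditioned (P : γ → ℝ) (C : Finset γ) : γ → ℝ :=
  fun z => P z * (if z ∈ C then 1 else 0) / ∑ w ∈ C, P w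

lemma conditioned_nonneg (hP : ∀ z, 0 ≤ P z) (z : γ) : 0 ≤ conditioned P C z := by
  unfold conditioned
  split_ifs <;> simp [div_nonneg, hP, sum_nonneg]

lemma mem_and_ne_zero_of_conditioned_ne_zero {z : γ} (hz : conditioned P C z ≠ 0) :
    z ∈ C ∧ P z ≠ 0 := by
  by_contra h
  rcases not_and_or.1 h with h | h <;> simp [conditioned, h] at hz

lemma sum_conditioned [Fintype γ] (hC : ∑ w ∈ C, P w ≠ 0) : ∑ z, conditioned P C z = 1 := by
  simp [conditioned, ← sum_div, mul_ite, sum_ite_mem, hC]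

lemma klDiv_conditioned [Fintype γ] (hC : ∑ w ∈ C, P w ≠ 0) :
    klDiv (conditioned P C) P = -log (∑ w ∈ C, P w) := by
  have hterm : ∀ z, conditioned P C z * log (conditioned P C z / P z)
      = -log (∑ w ∈ C, P w) * conditioned P C z := by
    intro z
    by_cases hz : conditioned P C z = 0
    · simp [hz]
    obtain ⟨hzC, hPz⟩ := mem_and_ne_zero_of_conditioned_ne_zero hz
    have : conditioned P C z / P z = (∑ w ∈ C, P w)⁻¹ := by
      simp [conditioned, hzC]
      field_simp
    rw [this, log_inv, mul_comm]
  simp_rw [klDiv, hterm, ← mul_sum, sum_conditioned hC, mul_one]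

end Conditioning

section SubNonsignalling

variable {Υ χ α σ : Type*} [Fintype χ] [Fintype α] [DecidableEq α]

lemma sum_kernel_mul_le_of_marg_le [Fintype Υ] (a : Υ → α) {K : χ → Υ → ℝ} {Q : χ → α → ℝ}
    (hKQ : ∀ x α', marg a (K x) α' ≤ Q x α') {F : α → χ → ℝ} (hF : ∀ α' x, 0 ≤ F α' x) :
    ∑ z : Υ × χ, K z.2 z.1 * F (a z.1) z.2 ≤ ∑ p : α × χ, Q p.2 p.1 * F p.1 p.2 := by
  simp only [Fintype.sum_prod_type_right]
  gcongr with x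
  rw [← sum_marg_mul a (K x) (F · x)]
  gcongr with α'
  · exact hF α' x
  · exact hKQ x α'

lemma sum_channel_mul_condMarg_le [Fintype σ] [DecidableEq χ] [DecidableEq σ] {γ : Type*}
    [Fintype γ] {T : γ → ℝ} (hT : ∀ z, 0 ≤ T z) (f : γ → α) (g : γ → χ) (c : χ → σ)
    {Q : σ → α → ℝ} (hQ : ∀ s, IsPmf (Q s)) :
    ∑ p : α × χ, Q (c p.2) p.1 * (marg (fun z => (f z, g z)) T p * marg (fun z => c (g z)) T (c p.2)
      / marg (fun z => (f z, c (g z))) T (p.1, c p.2)) ≤ ∑ z, T z := by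
  set mC := marg (fun z => c (g z)) T
  set mAC := marg (fun z => (f z, c (g z))) T
  let h : α × σ → ℝ := fun q => Q q.2 q.1 * mC q.2 / mAC q
  calc _ = ∑ p : α × χ, marg (fun z => (f z, g z)) T p * h (p.1, c p.2) :=
          sum_congr rfl fun p _ => by simp only [h]; ring
    _ = ∑ q, mAC q * h q :=
          (sum_marg_mul _ T fun p : α × χ => h (p.1, c p.2)).trans (sum_marg_mul _ T h).symm
    _ ≤ ∑ q : α × σ, Q q.2 q.1 * mC q.2 := by
          refine sum_le_sum fun q _ => ?_
          rcases eq_or_ne (mAC q) 0 with hq | hq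
          · simpa [hq] using mul_nonneg ((hQ _).1 _) (marg_nonneg hT _ _)
          · exact (mul_div_cancel₀ _ hq).le
    _ = ∑ z, T z := by
          simp only [Fintype.sum_prod_type_right, ← sum_mul, (hQ _).2, one_mul]
          exact sum_marg _ T

variable {β : Type*} [Fintype Υ] [Fintype β] [Fintype σ] [DecidableEq χ] [DecidableEq β]
  [DecidableEq σ]

theorem klDiv_eq_condMI_add_klDiv_marg_add_klDiv {T : Υ × χ → ℝ} (hT : ∀ z, 0 ≤ T z)
    (P : χ → ℝ) (K : χ → Υ → ℝ) (hsupp : ∀ z, T z ≠ 0 → P z.2 * K z.2 z.1 ≠ 0)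
    (a : Υ → α) (b : χ → β) (c : χ → σ) (hbc : (fun x => (b x, c x)).Injective) :
    klDiv T (fun z => P z.2 * K z.2 z.1) =
      condMI T (fun z => a z.1) (fun z => b z.2) (fun z => c z.2) + klDiv (marg Prod.snd T) P
        + klDiv T (fun z => K z.2 z.1 * (marg (fun w => (a w.1, w.2)) T (a z.1, z.2)
            * marg (fun w => c w.2) T (c z.2)
            / marg (fun w => (a w.1, c w.2)) T (a z.1, c z.2))) := by
  have hX (x : χ) : marg Prod.snd T x = marg (fun w => (b w.2, c w.2)) T (b x, c x) :=
    (marg_comp_apply_of_injective Prod.snd hbc T x).symm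
  have hAX (u : Υ) (x : χ) : marg (fun w => (a w.1, b w.2, c w.2)) T (a u, b x, c x)
      = marg (fun w => (a w.1, w.2)) T (a u, x) :=
    marg_comp_apply_of_injective (fun w => (a w.1, w.2)) (g := fun p => (p.1, b p.2, c p.2))
      (fun p q h => by simp_all [Prod.ext_iff, ← hbc.eq_iff]) T (a u, x)
  rw [klDiv, condMI, klDiv, sum_marg_mul, klDiv, ← sum_add_distrib, ← sum_add_distrib]
  refine sum_congr rfl fun z _ => ?_
  rcases eq_or_ne (T z) 0 with hz | hz
  · simp [hz]
  obtain ⟨hP0, hK0⟩ := mul_ne_zero_iff.1 (hsupp z hz)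
  have hAX0 := marg_apply_ne_zero hT (fun w => (a w.1, w.2)) hz
  have hC0 := marg_apply_ne_zero hT (fun w => c w.2) hz
  have hAC0 := marg_apply_ne_zero hT (fun w => (a w.1, c w.2)) hz
  have hBC0 := marg_apply_ne_zero hT (fun w => (b w.2, c w.2)) hz
  rw [hX, hAX, ← mul_add, ← mul_add, ← log_mul (by positivity) (by positivity),
    ← log_mul (by positivity) (by positivity)]
  congr 2
  field_simp

theorem condMI_add_klDiv_marg_le {T : Υ × χ → ℝ} (hT : ∀ z, 0 ≤ T z)
    (P : χ → ℝ) (K : χ → Υ → ℝ) (hK : ∀ x u, 0 ≤ K x u)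
    (hsupp : ∀ z, T z ≠ 0 → P z.2 * K z.2 z.1 ≠ 0)
    (a : Υ → α) (b : χ → β) (c : χ → σ) (hbc : (fun x => (b x, c x)).Injective)
    (Q : σ → α → ℝ) (hQ : ∀ s, IsPmf (Q s)) (hKQ : ∀ x α', marg a (K x) α' ≤ Q (c x) α') :
    condMI T (fun z => a z.1) (fun z => b z.2) (fun z => c z.2) + klDiv (marg Prod.snd T) P
      ≤ klDiv T (fun z => P z.2 * K z.2 z.1) := by
  let F : α → χ → ℝ := fun α' x => marg (fun w => (a w.1, w.2)) T (α', x)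
    * marg (fun w => c w.2) T (c x) / marg (fun w => (a w.1, c w.2)) T (α', c x)
  have hF (α' x) : 0 ≤ F α' x :=
    div_nonneg (mul_nonneg (marg_nonneg hT _ _) (marg_nonneg hT _ _)) (marg_nonneg hT _ _)
  have hR (z : Υ × χ) : 0 ≤ K z.2 z.1 * F (a z.1) z.2 := mul_nonneg (hK _ _) (hF _ _)
  have hTR (z : Υ × χ) (hz : T z ≠ 0) : K z.2 z.1 * F (a z.1) z.2 ≠ 0 := by
    have hK0 := (mul_ne_zero_iff.1 (hsupp z hz)).2
    have hAX0 := marg_apply_ne_zero hT (fun w => (a w.1, w.2)) hz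
    have hC0 := marg_apply_ne_zero hT (fun w => c w.2) hz
    have hAC0 := marg_apply_ne_zero hT (fun w => (a w.1, c w.2)) hz
    simp only [F]
    positivity
  have hmass : ∑ z : Υ × χ, K z.2 z.1 * F (a z.1) z.2 ≤ ∑ z, T z :=
    (sum_kernel_mul_le_of_marg_le a hKQ hF).trans
      (sum_channel_mul_condMarg_le hT (fun w => a w.1) Prod.snd c hQ)
  have hgibbs := sum_sub_sum_le_klDiv hT hR hTR
  rw [klDiv_eq_condMI_add_klDiv_marg_add_klDiv hT P K hsupp a b c hbc]
  linarith

end SubNonsignalling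

lemma injective_restrict_compl_prod_restrict {ι : Type*} {Y : ι → Type*} (A : Finset ι) :
    (fun y : ∀ i, Y i =>
      (fun i : {j // j ∉ A} => y i.1, fun i : {j // j ∈ A} => y i.1)).Injective := by
  intro y y' h
  funext i
  by_cases hi : i ∈ A
  · exact congrFun (congrArg Prod.snd h) ⟨i, hi⟩
  · exact congrFun (congrArg Prod.fst h) ⟨i, hi⟩

theorem change_of_measure_approx_nonsignalling_general
    {ι : Type*} [Fintype ι] [DecidableEq ι] {X U : ι → Type*}
    [∀ i, Fintype (X i)] [∀ i, DecidableEq (X i)]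
    [∀ i, Fintype (U i)] [∀ i, DecidableEq (U i)]
    (n : ℕ) (δ : ℝ)
    (PX : (∀ i, X i) → ℝ) (hPX : IsPmf PX)
    (K : (∀ i, Fin n → X i) → (∀ i, Fin n → U i) → ℝ)
    (hKnn : ∀ x u, 0 ≤ K x u)
    (hSNS : ∀ A : Finset ι, A ≠ Finset.univ →
      ∃ Q : (∀ i : {j // j ∈ A}, Fin n → X i.1) → (∀ i : {j // j ∈ A}, Fin n → U i.1) → ℝ,
        (∀ xA, IsPmf (Q xA)) ∧
        ∀ x uA, marg (fun u => fun i : {j // j ∈ A} => u i.1) (K x) uA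
                  ≤ Q (fun i => x i.1) uA)
    (C : Finset ((∀ i, Fin n → U i) × (∀ i, Fin n → X i)))
    (hC : Real.exp (-(n * δ)) <
      ∑ z ∈ C, (∏ j, PX (fun i => z.2 i j)) * K z.2 z.1) :
    ∀ A : Finset ι, A ≠ Finset.univ →
      condMI
          (fun z : (∀ i, Fin n → U i) × (∀ i, Fin n → X i) => ((∏ j, PX (fun i => z.2 i j)) * K z.2 z.1)
            * (if z ∈ C then 1 else 0)
            / ∑ w ∈ C, (∏ j, PX (fun i => w.2 i j)) * K w.2 w.1)
          (fun z => fun i : {j // j ∈ A} => z.1 i.1)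
          (fun z => fun i : {j // j ∉ A} => z.2 i.1)
          (fun z => fun i : {j // j ∈ A} => z.2 i.1)
        + klDiv
            (marg Prod.snd
              (fun z : (∀ i, Fin n → U i) × (∀ i, Fin n → X i) => ((∏ j, PX (fun i => z.2 i j)) * K z.2 z.1)
                * (if z ∈ C then 1 else 0)
                / ∑ w ∈ C, (∏ j, PX (fun i => w.2 i j)) * K w.2 w.1))
            (fun x => ∏ j, PX (fun i => x i j))
        ≤ klDiv
            (fun z : (∀ i, Fin n → U i) × (∀ i, Fin n → X i) => ((∏ j, PX (fun i => z.2 i j)) * K z.2 z.1)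
              * (if z ∈ C then 1 else 0)
              / ∑ w ∈ C, (∏ j, PX (fun i => w.2 i j)) * K w.2 w.1)
            (fun z => (∏ j, PX (fun i => z.2 i j)) * K z.2 z.1) ∧
      klDiv
          (fun z : (∀ i, Fin n → U i) × (∀ i, Fin n → X i) => ((∏ j, PX (fun i => z.2 i j)) * K z.2 z.1)
            * (if z ∈ C then 1 else 0)
            / ∑ w ∈ C, (∏ j, PX (fun i => w.2 i j)) * K w.2 w.1)
          (fun z => (∏ j, PX (fun i => z.2 i j)) * K z.2 z.1)
        ≤ n * δ := by
  intro A hA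
  obtain ⟨Q, hQ, hKQ⟩ := hSNS A hA
  let P : (∀ i, Fin n → U i) × (∀ i, Fin n → X i) → ℝ :=
    fun z => (∏ j, PX fun i => z.2 i j) * K z.2 z.1
  have hP (z) : 0 ≤ P z := mul_nonneg (prod_nonneg fun j _ => hPX.1 _) (hKnn _ _)
  have hPC : 0 < ∑ z ∈ C, P z := (exp_pos _).trans hC
  have hinfo := condMI_add_klDiv_marg_le (conditioned_nonneg (C := C) hP)
    (fun x => ∏ j, PX fun i => x i j) K hKnn
    (fun z hz => (mem_and_ne_zero_of_conditioned_ne_zero hz).2) (fun u (i : {j // j ∈ A}) => u i.1)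
    (fun x (i : {j // j ∉ A}) => x i.1) (fun x (i : {j // j ∈ A}) => x i.1)
    (injective_restrict_compl_prod_restrict A) Q hQ hKQ
  have hlog := (lt_log_iff_exp_lt hPC).2 hC
  exact ⟨hinfo, (klDiv_conditioned hPC.ne').trans_le (by linarith)⟩

/-- Change of measure: if a sub-nonsignalling strategy wins the event `C` with
probability greater than `exp(−nδ)`, then conditioning the joint measure on `C`
yields, for every proper subset `A` of provers,
`I(Ũ_Aⁿ ∧ X̃_{A^c}ⁿ | X̃_Aⁿ) + D(P̃_{X_Mⁿ} ‖ P_{X_M}ⁿ) ≤ D(P̃_{U_Mⁿ X_Mⁿ} ‖ P_{U_Mⁿ X_Mⁿ}) ≤ nδ`. -/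
theorem change_of_measure_approx_nonsignalling
    {ι : Type*} [Fintype ι] [DecidableEq ι] {X U : ι → Type*}
    [∀ i, Fintype (X i)] [∀ i, DecidableEq (X i)]
    [∀ i, Fintype (U i)] [∀ i, DecidableEq (U i)]
    (n : ℕ) (hn : 1 ≤ n) (δ : ℝ)
    (PX : (∀ i, X i) → ℝ) (hPX : IsPmf PX)
    (K : (∀ i, Fin n → X i) → (∀ i, Fin n → U i) → ℝ)
    (hKnn : ∀ x u, 0 ≤ K x u) (hKsub : ∀ x, ∑ u, K x u ≤ 1)
    (hSNS : ∀ A : Finset ι, A ≠ Finset.univ →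
      ∃ Q : (∀ i : {j // j ∈ A}, Fin n → X i.1) → (∀ i : {j // j ∈ A}, Fin n → U i.1) → ℝ,
        (∀ xA, IsPmf (Q xA)) ∧
        ∀ x uA, marg (fun u => fun i : {j // j ∈ A} => u i.1) (K x) uA
                  ≤ Q (fun i => x i.1) uA)
    (C : Finset ((∀ i, Fin n → U i) × (∀ i, Fin n → X i)))
    (hC : Real.exp (-(n * δ)) <
      ∑ z ∈ C, (∏ j, PX (fun i => z.2 i j)) * K z.2 z.1) :
    ∀ A : Finset ι, A ≠ Finset.univ →
      condMI
          (fun z : (∀ i, Fin n → U i) × (∀ i, Fin n → X i) => ((∏ j, PX (fun i => z.2 i j)) * K z.2 z.1)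
            * (if z ∈ C then 1 else 0)
            / ∑ w ∈ C, (∏ j, PX (fun i => w.2 i j)) * K w.2 w.1)
          (fun z => fun i : {j // j ∈ A} => z.1 i.1)
          (fun z => fun i : {j // j ∉ A} => z.2 i.1)
          (fun z => fun i : {j // j ∈ A} => z.2 i.1)
        + klDiv
            (marg Prod.snd
              (fun z : (∀ i, Fin n → U i) × (∀ i, Fin n → X i) => ((∏ j, PX (fun i => z.2 i j)) * K z.2 z.1)
                * (if z ∈ C then 1 else 0)
                / ∑ w ∈ C, (∏ j, PX (fun i => w.2 i j)) * K w.2 w.1))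
            (fun x => ∏ j, PX (fun i => x i j))
        ≤ klDiv
            (fun z : (∀ i, Fin n → U i) × (∀ i, Fin n → X i) => ((∏ j, PX (fun i => z.2 i j)) * K z.2 z.1)
              * (if z ∈ C then 1 else 0)
              / ∑ w ∈ C, (∏ j, PX (fun i => w.2 i j)) * K w.2 w.1)
            (fun z => (∏ j, PX (fun i => z.2 i j)) * K z.2 z.1) ∧
      klDiv
          (fun z : (∀ i, Fin n → U i) × (∀ i, Fin n → X i) => ((∏ j, PX (fun i => z.2 i j)) * K z.2 z.1)
            * (if z ∈ C then 1 else 0)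
            / ∑ w ∈ C, (∏ j, PX (fun i => w.2 i j)) * K w.2 w.1)
          (fun z => (∏ j, PX (fun i => z.2 i j)) * K z.2 z.1)
        ≤ n * δ :=
  change_of_measure_approx_nonsignalling_general n δ PX hPX K hKnn hSNS C hC
end
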